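/- Let μ₁, μ₂, μ₃ be probability measures on ℝ with finite first moments increasing in convex order, and let c ∈ C_lin(ℝ²). Suppose that for every u ∈ L¹(μ₂) there exists λ_u ∈ [0,1] such that ∫u dμ₂ = λ_u ∫u dμ₁ + (1−λ_u) ∫u dμ₃. Then inf over ℚ ∈ M(μ₁,μ₂,μ₃) of E_ℚ[c(S₁,S₃)] = inf over ℚ ∈ M(μ₁,μ₃) of E_ℚ[c(S₁,S₃)]. -/

import Mathlib

open MeasureTheory

def BddCont (f : ℝ → ℝ) : Prop :=
  Continuous f ∧ ∃ M : ℝ, ∀ x, |f x| ≤ M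

def BddCont2 (f : ℝ × ℝ → ℝ) : Prop :=
  Continuous f ∧ ∃ M : ℝ, ∀ p, |f p| ≤ M

/-- A three-period martingale measure on `ℝ³` with prescribed marginals. -/
def IsMM3 (Q : Measure (ℝ × ℝ × ℝ)) (μ₁ μ₂ μ₃ : Measure ℝ) : Prop :=
  IsProbabilityMeasure Q ∧
  Q.map (fun p => p.1) = μ₁ ∧ Q.map (fun p => p.2.1) = μ₂ ∧ Q.map (fun p => p.2.2) = μ₃ ∧
  Integrable (fun p : ℝ × ℝ × ℝ => p.1) Q ∧
  Integrable (fun p : ℝ × ℝ × ℝ => p.2.1) Q ∧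
  Integrable (fun p : ℝ × ℝ × ℝ => p.2.2) Q ∧
  (∀ Δ : ℝ → ℝ, BddCont Δ → ∫ p : ℝ × ℝ × ℝ, Δ p.1 * (p.2.1 - p.1) ∂Q = 0) ∧
  (∀ Δ : ℝ × ℝ → ℝ, BddCont2 Δ →
    ∫ p : ℝ × ℝ × ℝ, Δ (p.1, p.2.1) * (p.2.2 - p.2.1) ∂Q = 0)

/-- A two-period martingale measure on `ℝ²` with prescribed marginals. -/
def IsMM2 (Q : Measure (ℝ × ℝ)) (μ₁ μ₃ : Measure ℝ) : Prop :=
  IsProbabilityMeasure Q ∧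
  Q.map Prod.fst = μ₁ ∧ Q.map Prod.snd = μ₃ ∧
  Integrable (fun p : ℝ × ℝ => p.1) Q ∧ Integrable (fun p : ℝ × ℝ => p.2) Q ∧
  ∀ Δ : ℝ → ℝ, BddCont Δ → ∫ p : ℝ × ℝ, Δ p.1 * (p.2 - p.1) ∂Q = 0
/-- Continuous functions of linear growth on `ℝ²`. -/
def CLin2 (c : ℝ × ℝ → ℝ) : Prop :=
  Continuous c ∧ ∃ L : ℝ, ∀ p : ℝ × ℝ, |c p| ≤ L * (1 + |p.1| + |p.2|)

/-- Convex order of probability measures on `ℝ`. -/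
def ConvOrder (μ ν : Measure ℝ) : Prop :=
  ∀ f : ℝ → ℝ, ConvexOn ℝ Set.univ f → Integrable f μ → Integrable f ν →
    ∫ x, f x ∂μ ≤ ∫ x, f x ∂ν

/-- Values of the three-marginal MOT problem for a payoff depending on the
first and third coordinates. -/
def MotVal3 (μ₁ μ₂ μ₃ : Measure ℝ) (c : ℝ × ℝ → ℝ) : Set ℝ :=
  {r : ℝ | ∃ Q : Measure (ℝ × ℝ × ℝ), IsMM3 Q μ₁ μ₂ μ₃ ∧
    r = ∫ p : ℝ × ℝ × ℝ, c (p.1, p.2.2) ∂Q}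

/-- Values of the two-marginal MOT problem. -/
def MotVal2 (μ₁ μ₃ : Measure ℝ) (c : ℝ × ℝ → ℝ) : Set ℝ :=
  {r : ℝ | ∃ Q : Measure (ℝ × ℝ), IsMM2 Q μ₁ μ₃ ∧ r = ∫ p : ℝ × ℝ, c p ∂Q}

/-!
Written as `∫ u dμ₂ - ∫ u dμ₃ = λ_u (∫ u dμ₁ - ∫ u dμ₃)`, the hypothesis compares two linear
functionals of `u`, and pointwise proportionality of linear functionals forces a single constant:
one `λ ∈ [0, 1]` serves every `u` (here: every simple function). Testing it on indicators gives
`μ₂ = λ μ₁ + (1 - λ) μ₃`. For such a `μ₂`, every martingale coupling `Q` of `(μ₁, μ₃)` lifts to a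
three-period martingale measure with the same cost `c(S₁, S₃)`: with probability `λ` the price
stays at `S₁` until time 2 and then jumps to `S₃`, otherwise it jumps at once and stays.
Conversely, forgetting `S₂` turns any three-period martingale measure into a two-period one, so the
two problems have the same set of values.
-/

open Set ENNReal

lemma LinearMap.exists_forall_eq_mul_of_forall_exists {𝕜 V : Type*} [Field 𝕜] [AddCommGroup V]
    [Module 𝕜 V] (d e : V →ₗ[𝕜] 𝕜) (S : Set 𝕜) (h : ∀ v, ∃ l ∈ S, e v = l * d v) :
    ∃ l ∈ S, ∀ v, e v = l * d v := by
  by_cases hd : ∀ v, d v = 0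
  · obtain ⟨l, hl, -⟩ := h 0
    refine ⟨l, hl, fun v => ?_⟩
    obtain ⟨m, -, hm⟩ := h v
    rw [hm, hd v, mul_zero, mul_zero]
  push Not at hd
  obtain ⟨v₀, hv₀⟩ := hd
  obtain ⟨l, hl, hl₀⟩ := h v₀
  refine ⟨l, hl, fun v => mul_left_cancel₀ hv₀ ?_⟩
  -- `d v₀ • v - d v • v₀` lies in the kernel of `d`, hence in that of `e`
  obtain ⟨m, -, hm⟩ := h (d v₀ • v - d v • v₀)
  simp only [map_sub, map_smul, smul_eq_mul, mul_comm (d v₀) (d v), sub_self, mul_zero] at hm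
  rw [hl₀] at hm
  linear_combination hm

section
variable {α : Type*} [MeasurableSpace α]

noncomputable def simpleFuncIntegral (μ : Measure α) [IsFiniteMeasure μ] :
    SimpleFunc α ℝ →ₗ[ℝ] ℝ where
  toFun f := ∫ x, f x ∂μ
  map_add' f g := by
    simpa using integral_add (f.integrable_of_isFiniteMeasure) (g.integrable_of_isFiniteMeasure)
  map_smul' r f := by simpa using integral_const_mul r (f : α → ℝ)

@[simp]
lemma simpleFuncIntegral_apply (μ : Measure α) [IsFiniteMeasure μ] (f : SimpleFunc α ℝ) :
    simpleFuncIntegral μ f = ∫ x, f x ∂μ :=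
  rfl

lemma eq_smul_add_smul_of_integral_simpleFunc {μ₁ μ₂ μ₃ : Measure α} [IsFiniteMeasure μ₁]
    [IsFiniteMeasure μ₂] [IsFiniteMeasure μ₃] {l : ℝ} (hl : l ∈ Icc (0 : ℝ) 1)
    (h : ∀ f : SimpleFunc α ℝ, ∫ x, f x ∂μ₂ = l * ∫ x, f x ∂μ₁ + (1 - l) * ∫ x, f x ∂μ₃) :
    μ₂ = ENNReal.ofReal l • μ₁ + ENNReal.ofReal (1 - l) • μ₃ := by
  ext t ht
  have ht' := h ((SimpleFunc.const α (1 : ℝ)).restrict t)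
  simp only [SimpleFunc.coe_restrict _ ht, SimpleFunc.coe_const, Function.const_one,
    integral_indicator_one ht] at ht'
  rw [Measure.add_apply, Measure.smul_apply, Measure.smul_apply, smul_eq_mul, smul_eq_mul,
    ← ofReal_measureReal, ← ofReal_measureReal, ← ofReal_measureReal, ← ENNReal.ofReal_mul hl.1,
    ← ENNReal.ofReal_mul (sub_nonneg.2 hl.2),
    ← ENNReal.ofReal_add (mul_nonneg hl.1 measureReal_nonneg)
      (mul_nonneg (sub_nonneg.2 hl.2) measureReal_nonneg), ht']

lemma exists_eq_smul_add_smul_of_forall_exists {μ₁ μ₂ μ₃ : Measure α} [IsFiniteMeasure μ₁]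
    [IsFiniteMeasure μ₂] [IsFiniteMeasure μ₃]
    (h : ∀ f : SimpleFunc α ℝ, ∃ l ∈ Icc (0 : ℝ) 1,
      ∫ x, f x ∂μ₂ = l * ∫ x, f x ∂μ₁ + (1 - l) * ∫ x, f x ∂μ₃) :
    ∃ a b : ℝ≥0∞, a + b = 1 ∧ μ₂ = a • μ₁ + b • μ₃ := by
  obtain ⟨l, hl, hmix⟩ := LinearMap.exists_forall_eq_mul_of_forall_exists
    (simpleFuncIntegral μ₁ - simpleFuncIntegral μ₃)
    (simpleFuncIntegral μ₂ - simpleFuncIntegral μ₃) (Icc 0 1) fun f => by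
      obtain ⟨l, hl, hf⟩ := h f
      refine ⟨l, hl, ?_⟩
      simp only [LinearMap.sub_apply, simpleFuncIntegral_apply, hf]
      ring
  refine ⟨_, _, ?_, eq_smul_add_smul_of_integral_simpleFunc hl fun f => ?_⟩
  · rw [← ofReal_add hl.1 (sub_nonneg.2 hl.2), add_sub_cancel, ofReal_one]
  · have hf := hmix f
    simp only [LinearMap.sub_apply, simpleFuncIntegral_apply] at hf
    linear_combination hf

end

lemma BddCont.integrable_comp_mul_sub {α : Type*} [MeasurableSpace α] {μ : Measure α}
    {Δ : ℝ → ℝ} (hΔ : BddCont Δ) {φ f g : α → ℝ} (hφ : Measurable φ) (hf : Integrable f μ)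
    (hg : Integrable g μ) : Integrable (fun x => Δ (φ x) * (f x - g x)) μ := by
  obtain ⟨hΔc, M, hM⟩ := hΔ
  exact (hf.sub hg).bdd_mul (hΔc.measurable.comp hφ).aestronglyMeasurable
    (ae_of_all _ fun x => hM (φ x))

lemma BddCont.comp_fst {Δ : ℝ → ℝ} (hΔ : BddCont Δ) : BddCont2 fun p => Δ p.1 :=
  ⟨hΔ.1.comp continuous_fst, hΔ.2.imp fun _ hM p => hM p.1⟩

lemma BddCont2.comp_diag {Δ : ℝ × ℝ → ℝ} (hΔ : BddCont2 Δ) : BddCont fun x => Δ (x, x) :=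
  ⟨hΔ.1.comp (continuous_id.prodMk continuous_id), hΔ.2.imp fun _ hM x => hM (x, x)⟩

lemma CLin2.integrable {c : ℝ × ℝ → ℝ} (hc : CLin2 c) {Q : Measure (ℝ × ℝ)}
    [IsFiniteMeasure Q] (h₁ : Integrable Prod.fst Q) (h₂ : Integrable Prod.snd Q) :
    Integrable c Q := by
  obtain ⟨hcont, L, hL⟩ := hc
  refine ((((integrable_const 1).add h₁.abs).add h₂.abs).const_mul L).mono
    hcont.aestronglyMeasurable (ae_of_all _ fun p => ?_)
  rw [Real.norm_eq_abs, Real.norm_eq_abs]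
  exact (hL p).trans (le_abs_self _)

lemma IsMM3.isMM2_map {Q : Measure (ℝ × ℝ × ℝ)} {μ₁ μ₂ μ₃ : Measure ℝ}
    (hQ : IsMM3 Q μ₁ μ₂ μ₃) : IsMM2 (Q.map fun p => (p.1, p.2.2)) μ₁ μ₃ := by
  obtain ⟨hP, hm₁, -, hm₃, hi₁, hi₂, hi₃, hmg₁, hmg₂⟩ := hQ
  have hφ : Measurable fun p : ℝ × ℝ × ℝ => (p.1, p.2.2) :=
    measurable_fst.prodMk measurable_snd.snd
  refine ⟨Measure.isProbabilityMeasure_map hφ.aemeasurable,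
    by rwa [Measure.map_map measurable_fst hφ], by rwa [Measure.map_map measurable_snd hφ],
    (integrable_map_measure measurable_fst.aestronglyMeasurable hφ.aemeasurable).2 hi₁,
    (integrable_map_measure measurable_snd.aestronglyMeasurable hφ.aemeasurable).2 hi₃,
    fun Δ hΔ => ?_⟩
  have hcont : Continuous fun p : ℝ × ℝ => Δ p.1 * (p.2 - p.1) := by
    have := hΔ.1; fun_prop
  rw [integral_map hφ.aemeasurable hcont.aestronglyMeasurable]
  calc ∫ p, Δ p.1 * (p.2.2 - p.1) ∂Q
      = ∫ p, Δ p.1 * (p.2.2 - p.2.1) + Δ p.1 * (p.2.1 - p.1) ∂Q := by congr 1; ext p; ring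
    _ = 0 := by
      rw [integral_add (hΔ.integrable_comp_mul_sub measurable_fst hi₃ hi₂)
        (hΔ.integrable_comp_mul_sub measurable_fst hi₂ hi₁), hmg₂ _ hΔ.comp_fst, hmg₁ Δ hΔ,
        add_zero]

section Mixture
variable {α β : Type*} [MeasurableSpace α] [MeasurableSpace β] {Q : Measure α} {f g : α → β}
  {a b : ℝ≥0∞}

lemma map_smul_map_add_smul_map {γ : Type*} [MeasurableSpace γ] (hf : Measurable f)
    (hg : Measurable g) {π : β → γ} (hπ : Measurable π) :
    (a • Q.map f + b • Q.map g).map π = a • Q.map (π ∘ f) + b • Q.map (π ∘ g) := by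
  rw [Measure.map_add _ _ hπ, Measure.map_smul, Measure.map_smul, Measure.map_map hπ hf,
    Measure.map_map hπ hg]

lemma integrable_smul_map_add_smul_map (hf : Measurable f) (hg : Measurable g) (ha : a ≠ ∞)
    (hb : b ≠ ∞) {F : β → ℝ} (hF : Measurable F) (hFf : Integrable (F ∘ f) Q)
    (hFg : Integrable (F ∘ g) Q) : Integrable F (a • Q.map f + b • Q.map g) :=
  (((integrable_map_measure hF.aestronglyMeasurable hf.aemeasurable).2 hFf).smul_measure
    ha).add_measure
    (((integrable_map_measure hF.aestronglyMeasurable hg.aemeasurable).2 hFg).smul_measure hb)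

lemma integral_smul_map_add_smul_map (hf : Measurable f) (hg : Measurable g) (ha : a ≠ ∞)
    (hb : b ≠ ∞) {F : β → ℝ} (hF : Measurable F) (hFf : Integrable (F ∘ f) Q)
    (hFg : Integrable (F ∘ g) Q) :
    ∫ y, F y ∂(a • Q.map f + b • Q.map g) =
      a.toReal * ∫ x, F (f x) ∂Q + b.toReal * ∫ x, F (g x) ∂Q := by
  rw [integral_add_measure
    (((integrable_map_measure hF.aestronglyMeasurable hf.aemeasurable).2 hFf).smul_measure ha)
    (((integrable_map_measure hF.aestronglyMeasurable hg.aemeasurable).2 hFg).smul_measure hb),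
    integral_smul_measure, integral_smul_measure, integral_map hf.aemeasurable
    hF.aestronglyMeasurable, integral_map hg.aemeasurable hF.aestronglyMeasurable]
  rfl

end Mixture

def lateJump (q : ℝ × ℝ) : ℝ × ℝ × ℝ := (q.1, q.1, q.2)

def earlyJump (q : ℝ × ℝ) : ℝ × ℝ × ℝ := (q.1, q.2, q.2)

lemma measurable_lateJump : Measurable lateJump :=
  measurable_fst.prodMk (measurable_fst.prodMk measurable_snd)

lemma measurable_earlyJump : Measurable earlyJump :=
  measurable_fst.prodMk (measurable_snd.prodMk measurable_snd)

lemma IsMM2.isMM3_mixture {Q : Measure (ℝ × ℝ)} {μ₁ μ₃ : Measure ℝ} (hQ : IsMM2 Q μ₁ μ₃)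
    {a b : ℝ≥0∞} (hab : a + b = 1) :
    IsMM3 (a • Q.map lateJump + b • Q.map earlyJump) μ₁ (a • μ₁ + b • μ₃) μ₃ := by
  obtain ⟨hP, hm₁, hm₃, hi₁, hi₂, hmg⟩ := hQ
  obtain ⟨ha, hb⟩ := ENNReal.add_ne_top.1 (hab ▸ one_ne_top)
  have hint := fun {F : ℝ × ℝ × ℝ → ℝ} => integrable_smul_map_add_smul_map (Q := Q) (F := F)
    measurable_lateJump measurable_earlyJump ha hb
  have hintegral := fun {F : ℝ × ℝ × ℝ → ℝ} => integral_smul_map_add_smul_map (Q := Q) (F := F)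
    measurable_lateJump measurable_earlyJump ha hb
  refine ⟨⟨?_⟩, ?_, ?_, ?_, hint measurable_fst hi₁ hi₁, hint measurable_snd.fst hi₁ hi₂,
    hint measurable_snd.snd hi₂ hi₂, fun Δ hΔ => ?_, fun Δ hΔ => ?_⟩
  · simp [Measure.map_apply measurable_lateJump .univ,
      Measure.map_apply measurable_earlyJump .univ, hab]
  · rw [map_smul_map_add_smul_map measurable_lateJump measurable_earlyJump measurable_fst]
    change a • Q.map Prod.fst + b • Q.map Prod.fst = μ₁
    rw [hm₁, ← add_smul, hab, one_smul]
  · rw [map_smul_map_add_smul_map measurable_lateJump measurable_earlyJump measurable_snd.fst]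
    change a • Q.map Prod.fst + b • Q.map Prod.snd = _
    rw [hm₁, hm₃]
  · rw [map_smul_map_add_smul_map measurable_lateJump measurable_earlyJump measurable_snd.snd]
    change a • Q.map Prod.snd + b • Q.map Prod.snd = μ₃
    rw [hm₃, ← add_smul, hab, one_smul]
  -- along `lateJump` the first increment vanishes, along `earlyJump` the second one does
  · have hF : Measurable fun p : ℝ × ℝ × ℝ => Δ p.1 * (p.2.1 - p.1) := by
      have := hΔ.1.measurable; fun_prop
    rw [hintegral hF (hΔ.integrable_comp_mul_sub measurable_fst hi₁ hi₁)
      (hΔ.integrable_comp_mul_sub measurable_fst hi₂ hi₁)]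
    simp only [lateJump, earlyJump, sub_self, mul_zero, integral_zero, add_zero, hmg Δ hΔ]
  · have hF : Measurable fun p : ℝ × ℝ × ℝ => Δ (p.1, p.2.1) * (p.2.2 - p.2.1) := by
      have := hΔ.1.measurable; fun_prop
    rw [hintegral hF (hΔ.comp_diag.integrable_comp_mul_sub measurable_fst hi₂ hi₁)
      (by simp [Function.comp_def, earlyJump])]
    simp only [lateJump, earlyJump, sub_self, mul_zero, integral_zero, add_zero,
      hmg _ hΔ.comp_diag]

lemma motVal3_subset_motVal2 (μ₁ μ₂ μ₃ : Measure ℝ) {c : ℝ × ℝ → ℝ} (hc : Continuous c) :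
    MotVal3 μ₁ μ₂ μ₃ c ⊆ MotVal2 μ₁ μ₃ c := by
  rintro r ⟨Q, hQ, rfl⟩
  exact ⟨_, hQ.isMM2_map, (integral_map (measurable_fst.prodMk measurable_snd.snd).aemeasurable
    hc.aestronglyMeasurable).symm⟩

lemma motVal2_subset_motVal3 {μ₁ μ₃ : Measure ℝ} {c : ℝ × ℝ → ℝ} (hc : CLin2 c)
    {a b : ℝ≥0∞} (hab : a + b = 1) : MotVal2 μ₁ μ₃ c ⊆ MotVal3 μ₁ (a • μ₁ + b • μ₃) μ₃ c := by
  rintro r ⟨Q, hQ, rfl⟩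
  obtain ⟨ha, hb⟩ := ENNReal.add_ne_top.1 (hab ▸ one_ne_top)
  have := hQ.1
  have hcQ : Integrable c Q := hc.integrable hQ.2.2.2.1 hQ.2.2.2.2.1
  refine ⟨_, hQ.isMM3_mixture hab, ?_⟩
  have hF : Measurable fun p : ℝ × ℝ × ℝ => c (p.1, p.2.2) :=
    (hc.1.comp (continuous_fst.prodMk continuous_snd.snd)).measurable
  rw [eq_comm, integral_smul_map_add_smul_map measurable_lateJump measurable_earlyJump ha hb hF
    hcQ hcQ]
  simp only [lateJump, earlyJump, Prod.mk.eta]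
  rw [← add_mul, ← ENNReal.toReal_add ha hb, hab, toReal_one, one_mul]

theorem stmt_9_general (μ₁ μ₂ μ₃ : Measure ℝ)
    [IsProbabilityMeasure μ₁] [IsProbabilityMeasure μ₂] [IsProbabilityMeasure μ₃]
    (c : ℝ × ℝ → ℝ) (hc : CLin2 c)
    (hinterp : ∀ u : ℝ → ℝ, Integrable u μ₂ → ∃ lam : ℝ, lam ∈ Set.Icc (0 : ℝ) 1 ∧
      ∫ x, u x ∂μ₂ = lam * ∫ x, u x ∂μ₁ + (1 - lam) * ∫ x, u x ∂μ₃) :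
    sInf (MotVal3 μ₁ μ₂ μ₃ c) = sInf (MotVal2 μ₁ μ₃ c) := by
  obtain ⟨a, b, hab, hμ₂⟩ := exists_eq_smul_add_smul_of_forall_exists fun f =>
    hinterp f f.integrable_of_isFiniteMeasure
  rw [hμ₂, (motVal3_subset_motVal2 _ _ _ hc.1).antisymm (motVal2_subset_motVal3 hc hab)]

/-- If `μ₂` is a linear interpolation of `μ₁` and `μ₃` on every integrand, then
the intermediate marginal does not improve the lower price bound. -/
theorem stmt_9 (μ₁ μ₂ μ₃ : Measure ℝ)
    [IsProbabilityMeasure μ₁] [IsProbabilityMeasure μ₂] [IsProbabilityMeasure μ₃]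
    (hμ₁ : Integrable (fun x : ℝ => x) μ₁) (hμ₂ : Integrable (fun x : ℝ => x) μ₂)
    (hμ₃ : Integrable (fun x : ℝ => x) μ₃)
    (h12 : ConvOrder μ₁ μ₂) (h23 : ConvOrder μ₂ μ₃)
    (c : ℝ × ℝ → ℝ) (hc : CLin2 c)
    (hinterp : ∀ u : ℝ → ℝ, Integrable u μ₂ → ∃ lam : ℝ, lam ∈ Set.Icc (0 : ℝ) 1 ∧
      ∫ x, u x ∂μ₂ = lam * ∫ x, u x ∂μ₁ + (1 - lam) * ∫ x, u x ∂μ₃) :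
    sInf (MotVal3 μ₁ μ₂ μ₃ c) = sInf (MotVal2 μ₁ μ₃ c) :=
  stmt_9_general μ₁ μ₂ μ₃ c hc hinterp
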